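/- arXiv:1509.02119 — 2 statements merged into one kernel-verified Lean document; each statement's English description precedes it below -/
import Mathlib

section
/- For every δ ∈ (0,1], σ ∈ (0,1], n ≥ 1 and ω ∈ ℝⁿ, the sum over k ∈ ℤⁿ of (1 + |ω|·|k|)·e^{-δ|k|σ} is at most (1 + |ω|)·(e/(δσ))^{2n}. -/
/-!
Since `1 + ‖ω‖ |k|₁ ≤ (1 + ‖ω‖) ∏ₗ (1 + |kₗ|)`, each term is dominated by `(1 + ‖ω‖)` times
a product of one-dimensional weights, so with `a = δσ` the lattice sum is at most
`(1 + ‖ω‖) Sⁿ`, where `S = ∑_{m ∈ ℤ} (1 + |m|) e^{-a|m|} = 2 / (1 - e^{-a})² - 1`.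
For `a ≤ 1`, convexity of `exp` gives `1 - e^{-a} ≥ a (1 - e⁻¹)`, and `(e - 1)² ≥ 2` then
yields `S ≤ (e / a)²`.
-/

open Finset Real

theorem Finset.one_add_sum_le_prod_one_add {ι R : Type*} [CommSemiring R] [PartialOrder R]
    [IsOrderedRing R] (s : Finset ι) {g : ι → R} (hg : ∀ i ∈ s, 0 ≤ g i) :
    1 + ∑ i ∈ s, g i ≤ ∏ i ∈ s, (1 + g i) := by
  classical
  induction s using Finset.induction_on with
  | empty => simp
  | insert j s hj ih =>
    have hgj := hg j (mem_insert_self j s)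
    have hgs : ∀ i ∈ s, 0 ≤ g i := fun i hi => hg i (mem_insert_of_mem hi)
    rw [sum_insert hj, prod_insert hj]
    calc 1 + (g j + ∑ i ∈ s, g i)
        ≤ 1 + (g j + ∑ i ∈ s, g i) + g j * ∑ i ∈ s, g i :=
          le_add_of_nonneg_right (mul_nonneg hgj (sum_nonneg hgs))
      _ = (1 + g j) * (1 + ∑ i ∈ s, g i) := by ring
      _ ≤ (1 + g j) * ∏ i ∈ s, (1 + g i) :=
          mul_le_mul_of_nonneg_left (ih hgs) (add_nonneg zero_le_one hgj)

theorem HasSum.fin_pi_prod {β : Type*} {f : β → ℝ} {s : ℝ} (hf : HasSum f s)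
    (hf₀ : ∀ b, 0 ≤ f b) (n : ℕ) : HasSum (fun k : Fin n → β => ∏ l, f (k l)) (s ^ n) := by
  induction n with
  | zero => simp
  | succ n ih =>
    have hsummable : Summable fun p : β × (Fin n → β) => f p.1 * ∏ l, f (p.2 l) :=
      Summable.mul_of_nonneg (g := fun k : Fin n → β => ∏ l, f (k l)) hf.summable ih.summable
        (Pi.le_def.mpr hf₀) (Pi.le_def.mpr fun k => prod_nonneg fun l _ => hf₀ (k l))
    rw [pow_succ', ← (Fin.consEquiv fun _ => β).hasSum_iff]
    refine (hf.mul ih hsummable).congr_fun fun p => ?_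
    simp only [Function.comp_apply, Fin.consEquiv, Equiv.coe_fn_mk, Fin.prod_univ_succ,
      Fin.cons_zero, Fin.cons_succ]

theorem hasSum_int_one_add_abs_mul_exp {a : ℝ} (ha : 0 < a) :
    HasSum (fun m : ℤ => (1 + |(m : ℝ)|) * exp (-(a * |(m : ℝ)|)))
      (2 / (1 - exp (-a)) ^ 2 - 1) := by
  have hr : ‖exp (-a)‖ < 1 := by simpa using ha
  have hnat : HasSum (fun j : ℕ => (1 + |((j : ℤ) : ℝ)|) * exp (-(a * |((j : ℤ) : ℝ)|)))
      (1 / (1 - exp (-a)) ^ 2) := by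
    refine (hasSum_choose_mul_geometric_of_norm_lt_one 1 hr).congr_fun fun j => ?_
    rw [Int.cast_natCast, abs_of_nonneg (Nat.cast_nonneg j), ← exp_nat_mul,
      Nat.choose_one_right]
    push_cast
    ring_nf
  have hneg : HasSum (fun j : ℕ => (1 + |((-j : ℤ) : ℝ)|) * exp (-(a * |((-j : ℤ) : ℝ)|)))
      (1 / (1 - exp (-a)) ^ 2) := by
    simpa only [Int.cast_neg, abs_neg] using hnat
  have h := HasSum.of_nat_of_neg (f := fun m : ℤ => (1 + |(m : ℝ)|) * exp (-(a * |(m : ℝ)|)))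
    hnat hneg
  rwa [Int.cast_zero, abs_zero, mul_zero, neg_zero, exp_zero, add_zero, mul_one, ← two_mul,
    mul_one_div] at h

theorem mul_one_sub_exp_neg_one_le_one_sub_exp_neg {a : ℝ} (ha₀ : 0 ≤ a) (ha₁ : a ≤ 1) :
    a * (1 - exp (-1)) ≤ 1 - exp (-a) := by
  have := convexOn_exp.2 (Set.mem_univ (-1)) (Set.mem_univ 0) ha₀ (sub_nonneg.2 ha₁) (by ring)
  simp only [smul_eq_mul, mul_neg, mul_one, mul_zero, add_zero, exp_zero] at this
  linarith

theorem two_div_one_sub_exp_neg_sq_le {a : ℝ} (ha₀ : 0 < a) (ha₁ : a ≤ 1) :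
    2 / (1 - exp (-a)) ^ 2 ≤ (exp 1 / a) ^ 2 := by
  have hchord : a * (exp 1 - 1) ≤ exp 1 * (1 - exp (-a)) :=
    calc a * (exp 1 - 1) = exp 1 * (a * (1 - exp (-1))) := by rw [exp_neg]; field_simp
      _ ≤ exp 1 * (1 - exp (-a)) := by
        gcongr; exact mul_one_sub_exp_neg_one_le_one_sub_exp_neg ha₀.le ha₁
  have he : 2 ≤ (exp 1 - 1) ^ 2 := by nlinarith [exp_one_gt_d9]
  have hpos : 0 < 1 - exp (-a) := by simpa using ha₀
  rw [div_pow, div_le_div_iff₀ (by positivity) (by positivity)]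
  calc 2 * a ^ 2 ≤ (a * (exp 1 - 1)) ^ 2 := by rw [mul_pow]; nlinarith [sq_nonneg a]
    _ ≤ (exp 1 * (1 - exp (-a))) ^ 2 :=
      pow_le_pow_left₀ (mul_nonneg ha₀.le (sub_nonneg.2 (one_le_exp zero_le_one))) hchord 2
    _ = exp 1 ^ 2 * (1 - exp (-a)) ^ 2 := mul_pow _ _ 2

theorem one_add_mul_sum_abs_mul_exp_le {ι : Type*} (s : Finset ι) (x : ι → ℝ) {w : ℝ}
    (hw : 0 ≤ w) (a : ℝ) :
    (1 + w * ∑ i ∈ s, |x i|) * exp (-(a * ∑ i ∈ s, |x i|))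
      ≤ (1 + w) * ∏ i ∈ s, (1 + |x i|) * exp (-(a * |x i|)) := by
  have hS : 0 ≤ ∑ i ∈ s, |x i| := sum_nonneg fun i _ => abs_nonneg _
  rw [prod_mul_distrib, ← exp_sum, sum_neg_distrib, ← mul_sum, ← mul_assoc]
  gcongr
  calc 1 + w * ∑ i ∈ s, |x i| ≤ (1 + w) * (1 + ∑ i ∈ s, |x i|) := by nlinarith
    _ ≤ (1 + w) * ∏ i ∈ s, (1 + |x i|) := by
      gcongr; exact s.one_add_sum_le_prod_one_add fun i _ => abs_nonneg (x i)

theorem weighted_lattice_sum_bound_general (n : ℕ) (δ σ : ℝ)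
    (hδ : δ ∈ Set.Ioc (0:ℝ) 1) (hσ : σ ∈ Set.Ioc (0:ℝ) 1)
    (ω : EuclideanSpace ℝ (Fin n)) :
    ∑' k : Fin n → ℤ,
        (1 + ‖ω‖ * (∑ l, |((k l : ℝ))|)) * Real.exp (-(δ * (∑ l, |((k l : ℝ))|) * σ))
      ≤ (1 + ‖ω‖) * (Real.exp 1 / (δ * σ)) ^ (2 * n) := by
  obtain ⟨hδ₀, hδ₁⟩ := hδ
  obtain ⟨hσ₀, hσ₁⟩ := hσ
  have ha₀ : 0 < δ * σ := mul_pos hδ₀ hσ₀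
  have ha₁ : δ * σ ≤ 1 := mul_le_one₀ hδ₁ hσ₀.le hσ₁
  set F : ℤ → ℝ := fun m => (1 + |(m : ℝ)|) * exp (-(δ * σ * |(m : ℝ)|))
  have hF : HasSum F (2 / (1 - exp (-(δ * σ))) ^ 2 - 1) := hasSum_int_one_add_abs_mul_exp ha₀
  have hpi := (hF.fin_pi_prod (fun m => by positivity) n).mul_left (1 + ‖ω‖)
  have hterm : ∀ k : Fin n → ℤ,
      (1 + ‖ω‖ * (∑ l, |((k l : ℝ))|)) * exp (-(δ * (∑ l, |((k l : ℝ))|) * σ))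
        ≤ (1 + ‖ω‖) * ∏ l, F (k l) := fun k => by
    have h := one_add_mul_sum_abs_mul_exp_le univ (fun l => (k l : ℝ)) (norm_nonneg ω) (δ * σ)
    rwa [mul_right_comm δ]
  have hsummable := hpi.summable.of_nonneg_of_le (fun k => by positivity) hterm
  calc _ ≤ (1 + ‖ω‖) * (2 / (1 - exp (-(δ * σ))) ^ 2 - 1) ^ n :=
        hasSum_le hterm hsummable.hasSum hpi
    _ ≤ (1 + ‖ω‖) * ((exp 1 / (δ * σ)) ^ 2) ^ n := by
        gcongr
        · exact hF.nonneg fun m => by positivity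
        · linarith [two_div_one_sub_exp_neg_sq_le ha₀ ha₁]
    _ = (1 + ‖ω‖) * (exp 1 / (δ * σ)) ^ (2 * n) := by rw [pow_mul]

theorem weighted_lattice_sum_bound (n : ℕ) (hn : 1 ≤ n) (δ σ : ℝ)
    (hδ : δ ∈ Set.Ioc (0:ℝ) 1) (hσ : σ ∈ Set.Ioc (0:ℝ) 1)
    (ω : EuclideanSpace ℝ (Fin n)) :
    ∑' k : Fin n → ℤ,
        (1 + ‖ω‖ * (∑ l, |((k l : ℝ))|)) * Real.exp (-(δ * (∑ l, |((k l : ℝ))|) * σ))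
      ≤ (1 + ‖ω‖) * (Real.exp 1 / (δ * σ)) ^ (2 * n) :=
  weighted_lattice_sum_bound_general n δ σ hδ hσ ω
end

section
/- Let Γ > 0, γ₀ > 0, τ > 0, and define (γ_l)_{l≥0} by γ_l = Γ·Σ_{j=1}^{l} τ^{j-1} γ_{l-j} for l ≥ 1. Set Δ := τ + Γ. Then γ_l = γ₀·Γ·Δ^{l-1} for all l ≥ 1. -/
/-! Peeling off the term `j = 1` of the sum `S l = ∑_{j=1}^{l} τ^(j-1) γ(l-j)` gives
`S (l+1) = γ l + τ S l`; multiplying by `Γ` and using `γ l = Γ S l` yields `γ (l+1) = (τ + Γ) γ l`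
for `l ≥ 1`, so the sequence is geometric from `γ 1 = Γ γ₀` on. -/

open Finset

theorem Finset.sum_Icc_one_eq_sum_range {M : Type*} [AddCommMonoid M] (f : ℕ → M) (n : ℕ) :
    ∑ j ∈ Icc 1 n, f j = ∑ i ∈ range n, f (i + 1) := by
  rw [← Ico_add_one_right_eq_Icc, sum_Ico_eq_sum_range, Nat.add_sub_cancel]
  simp only [add_comm]

theorem sum_Icc_pow_mul_sub_succ {R : Type*} [CommSemiring R] (τ : R) (γ : ℕ → R) (n : ℕ) :
    ∑ j ∈ Icc 1 (n + 1), τ ^ (j - 1) * γ (n + 1 - j)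
      = γ n + τ * ∑ j ∈ Icc 1 n, τ ^ (j - 1) * γ (n - j) := by
  simp only [sum_Icc_one_eq_sum_range, sum_range_succ', mul_sum, Nat.add_sub_cancel,
    Nat.add_sub_add_right, Nat.sub_zero, pow_zero, one_mul, pow_succ', mul_assoc]
  exact add_comm _ _

theorem eq_pow_sub_one_mul_of_succ_eq_mul {M : Type*} [Monoid M] {u : ℕ → M} {r : M}
    (hstep : ∀ n, 1 ≤ n → u (n + 1) = r * u n) : ∀ n, 1 ≤ n → u n = r ^ (n - 1) * u 1 := by
  intro n hn
  induction n, hn using Nat.le_induction with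
  | base => simp
  | succ n hn ih =>
    rw [hstep n hn, ih, ← mul_assoc, ← pow_succ', Nat.sub_add_cancel hn, Nat.add_sub_cancel]

theorem linear_recurrence_geometric'_general (Γ γ₀ τ : ℝ) (γ : ℕ → ℝ)
    (hγ0 : γ 0 = γ₀)
    (hrec : ∀ l : ℕ, 1 ≤ l →
      γ l = Γ * ∑ j ∈ Finset.Icc 1 l, τ ^ (j - 1) * γ (l - j)) :
    ∀ l : ℕ, 1 ≤ l → γ l = γ₀ * Γ * (τ + Γ) ^ (l - 1) := by
  have hstep : ∀ n, 1 ≤ n → γ (n + 1) = (τ + Γ) * γ n := by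
    intro n hn
    rw [hrec (n + 1) (Nat.le_add_left 1 n), sum_Icc_pow_mul_sub_succ, hrec n hn]
    ring
  intro l hl
  rw [eq_pow_sub_one_mul_of_succ_eq_mul hstep l hl, hrec 1 le_rfl]
  simp only [Icc_self, sum_singleton, Nat.sub_self, pow_zero, hγ0]
  ring

theorem linear_recurrence_geometric' (Γ γ₀ τ : ℝ) (γ : ℕ → ℝ)
    (hΓ : 0 < Γ) (hτ : 0 < τ) (hγ₀ : 0 < γ₀) (hγ0 : γ 0 = γ₀)
    (hrec : ∀ l : ℕ, 1 ≤ l →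
      γ l = Γ * ∑ j ∈ Finset.Icc 1 l, τ ^ (j - 1) * γ (l - j)) :
    ∀ l : ℕ, 1 ≤ l → γ l = γ₀ * Γ * (τ + Γ) ^ (l - 1) :=
  linear_recurrence_geometric'_general Γ γ₀ τ γ hγ0 hrec
end
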